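/- arXiv:1701.01420 — 2 statements merged into one kernel-verified Lean document; each statement's English description precedes it below -/
import Mathlib

section
/- Let γ be a connected graph with half-edges and 𝒱 ⊆ Ver with 𝒱 ≠ Ver. Then the number of edges of γ with exactly one flag in ε⁻¹(𝒱) — which equals |E(γ)| − |E_γ(𝒱)| − |E_γ(Ver ∖ 𝒱)| — plus |F°_γ(𝒱)| is at least 2·|π₀(γ,𝒱)|. -/
/-- The set of edges of a graph with half-edges: unordered pairs `{f, ϑ f}`. -/
def edgeSet {F : Type*} (ϑ : F → F) : Set (Set F) :=
  {e | ∃ f, e = {f, ϑ f}}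

/-- The edges both of whose flags have ε-image in `S`. -/
def edgesIn {V F : Type*} (ε : F → V) (ϑ : F → F) (S : Set V) : Set (Set F) :=
  {e | ∃ f, e = {f, ϑ f} ∧ ε f ∈ S ∧ ε (ϑ f) ∈ S}

/-- One-step adjacency in the graph: `v` and `v'` are the two endpoints of an edge. -/
def Step {V F : Type*} (ε : F → V) (ϑ : F → F) (v v' : V) : Prop :=
  ∃ f, ε f = v ∧ ε (ϑ f) = v'

/-- The graph is connected: any two distinct vertices are joined by a chain of edges. -/
def IsConnectedGraph {V F : Type*} (ε : F → V) (ϑ : F → F) : Prop :=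
  ∀ v v' : V, v ≠ v' → Relation.ReflTransGen (Step ε ϑ) v v'

/-- One-step adjacency within the induced subgraph on the vertex subset `S`. -/
def StepIn {V F : Type*} (ε : F → V) (ϑ : F → F) (S : Set V) (v v' : V) : Prop :=
  v ∈ S ∧ v' ∈ S ∧ ∃ f, ε f = v ∧ ε (ϑ f) = v'

/-- The connected component of `v` in the induced subgraph on `S`. -/
def component {V F : Type*} (ε : F → V) (ϑ : F → F) (S : Set V) (v : V) : Set V :=
  {w | Relation.ReflTransGen (StepIn ε ϑ S) v w}

/-- `π₀(γ,S)`: the set of connected components of the induced subgraph on `S`. -/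
def pi0 {V F : Type*} (ε : F → V) (ϑ : F → F) (S : Set V) : Set (Set V) :=
  {C | ∃ v ∈ S, C = component ε ϑ S v}

/-- The crossing edges of a subset `C` of vertices: edges with exactly one flag
having ε-image in `C`. -/
def crossingEdges {V F : Type*} (ε : F → V) (ϑ : F → F) (C : Set V) : Set (Set F) :=
  {e | ∃ f, e = {f, ϑ f} ∧ ε f ∉ C ∧ ε (ϑ f) ∈ C}

/-- One-step adjacency in the graph obtained by deleting the two flags `f₀`, `ϑ f₀`. -/
def StepAvoid {V F : Type*} (ε : F → V) (ϑ : F → F) (f₀ : F) (v v' : V) : Prop :=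
  ∃ g, g ≠ f₀ ∧ g ≠ ϑ f₀ ∧ ε g = v ∧ ε (ϑ g) = v'

/-- The flag `f₀` disconnects `C` from the rest of the graph: after deleting the flags
`f₀` and `ϑ f₀`, there is no chain of edges from a vertex of `C` to a vertex outside `C`. -/
def Disconnects {V F : Type*} (ε : F → V) (ϑ : F → F) (C : Set V) (f₀ : F) : Prop :=
  ∀ v ∈ C, ∀ v' ∉ C, ¬ Relation.ReflTransGen (StepAvoid ε ϑ f₀) v v'

/-- `F°_γ(S)`: the flags `f` with `ε f ∉ S` that disconnect from the rest of the graph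
the connected component of the induced subgraph on `S` containing `ε (ϑ f)`. -/
def Fcirc {V F : Type*} (ε : F → V) (ϑ : F → F) (S : Set V) : Set F :=
  {f | ε f ∉ S ∧ ε (ϑ f) ∈ S ∧ Disconnects ε ϑ (component ε ϑ S (ε (ϑ f))) f}

/-- `F†_γ(S)`: the flags of `F°_γ(S)` whose associated component carries no marked label. -/
def Fdagger {V F L : Type*} (ε : F → V) (ϑ : F → F) (εS : L → V) (S : Set V) : Set F :=
  {f | f ∈ Fcirc ε ϑ S ∧ ∀ s : L, εS s ∉ component ε ϑ S (ε (ϑ f))}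

/-!
Every edge either lies in `E_γ(𝒱)`, lies in `E_γ(Ver ∖ 𝒱)`, or crosses `𝒱`, which gives the
identity. For the inequality, record each crossing edge by its flag outside `𝒱`; it belongs to
the component of `π₀(γ,𝒱)` containing the other endpoint. By connectedness every component
receives at least one such flag, and if it receives exactly one, deleting that edge cuts the
component off, so the flag lies in `F°_γ(𝒱)`. Hence each component contributes at least two.
-/

open Finset in
theorem two_mul_ncard_image_le_ncard_add_ncard {α β : Type*} {s t : Set α} (hs : s.Finite)
    (hts : t ⊆ s) (g : α → β)
    (hsingle : ∀ a ∈ s, (∀ a' ∈ s, g a' = g a → a' = a) → a ∈ t) :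
    2 * (g '' s).ncard ≤ s.ncard + t.ncard := by
  classical
  lift t to Finset α using hs.subset hts
  lift s to Finset α using hs
  rw [coe_subset] at hts
  rw [← coe_image, Set.ncard_coe_finset, Set.ncard_coe_finset, Set.ncard_coe_finset,
    card_eq_sum_card_image g s,
    card_eq_sum_card_fiberwise (fun a ha => mem_coe.2 (mem_image_of_mem g (hts ha))),
    ← sum_add_distrib, mul_comm, ← smul_eq_mul, ← sum_const]
  refine sum_le_sum fun b hb => ?_
  obtain ⟨a, ha, rfl⟩ := mem_image.1 hb
  have ha_fiber : a ∈ {a' ∈ s | g a' = g a} := mem_filter.2 ⟨ha, rfl⟩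
  by_cases hlarge : 2 ≤ #{a' ∈ s | g a' = g a}
  · omega
  have hat : a ∈ t := hsingle a ha fun a' ha' hga' =>
    card_le_one.1 (by omega) a' (mem_filter.2 ⟨ha', hga'⟩) a ha_fiber
  have := card_pos.2 ⟨a, ha_fiber⟩
  have := card_pos.2 ⟨a, (mem_filter.2 ⟨hat, rfl⟩ : a ∈ {a' ∈ t | g a' = g a})⟩
  omega

theorem Relation.ReflTransGen.exists_rel_mem_notMem {α : Type*} {r : α → α → Prop} {C : Set α}
    {a b : α} (h : Relation.ReflTransGen r a b) (ha : a ∈ C) (hb : b ∉ C) :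
    ∃ x ∈ C, ∃ y ∉ C, r x y := by
  induction h with
  | refl => exact absurd ha hb
  | @tail x y _ hxy ih =>
    by_cases hx : x ∈ C
    · exact ⟨x, hx, y, hb, hxy⟩
    · exact ih hx

def crossingFlags {V F : Type*} (ε : F → V) (ϑ : F → F) (S : Set V) : Set F :=
  {f | ε f ∉ S ∧ ε (ϑ f) ∈ S}

section HalfEdgeGraph
variable {V F : Type*} {ε : F → V} {ϑ : F → F} {S : Set V}

theorem stepIn_symm (hinv : Function.Involutive ϑ) : Std.Symm (StepIn ε ϑ S) :=
  ⟨fun _ _ ⟨hv, hv', f, hf, hf'⟩ => ⟨hv', hv, ϑ f, hf', by rw [hinv]; exact hf⟩⟩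

theorem component_subset {v : V} (hv : v ∈ S) : component ε ϑ S v ⊆ S := by
  intro w hw
  induction hw with
  | refl => exact hv
  | tail _ hstep _ => exact hstep.2.1

theorem component_eq_of_mem (hinv : Function.Involutive ϑ) {v w : V}
    (hw : w ∈ component ε ϑ S v) : component ε ϑ S w = component ε ϑ S v := by
  have := stepIn_symm (ε := ε) (S := S) hinv
  ext u
  exact ⟨hw.trans, (Std.Symm.symm _ _ hw).trans⟩

theorem mem_component_of_flag {v : V} (hv : v ∈ S) {g : F} (hg : ε g ∈ component ε ϑ S v)
    (hg' : ε (ϑ g) ∈ S) : ε (ϑ g) ∈ component ε ϑ S v :=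
  hg.tail ⟨component_subset hv hg, hg', g, rfl, rfl⟩

theorem exists_crossingFlags_component_eq (hinv : Function.Involutive ϑ)
    (hconn : IsConnectedGraph ε ϑ) (hS : S ≠ Set.univ) {v : V} (hv : v ∈ S) :
    ∃ f ∈ crossingFlags ε ϑ S, component ε ϑ S (ε (ϑ f)) = component ε ϑ S v := by
  obtain ⟨u, hu⟩ := (Set.ne_univ_iff_exists_notMem S).1 hS
  have hu' : u ∉ component ε ϑ S v := fun h => hu (component_subset hv h)
  obtain ⟨a, ha, b, hb, g, rfl, rfl⟩ :=
    (hconn v u (ne_of_mem_of_not_mem hv hu)).exists_rel_mem_notMem Relation.ReflTransGen.refl hu'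
  refine ⟨ϑ g, ⟨fun hbS => hb (mem_component_of_flag hv ha hbS), ?_⟩, ?_⟩ <;> rw [hinv]
  · exact component_subset hv ha
  · exact component_eq_of_mem hinv ha

theorem pi0_eq_image_crossingFlags (hinv : Function.Involutive ϑ)
    (hconn : IsConnectedGraph ε ϑ) (hS : S ≠ Set.univ) :
    pi0 ε ϑ S = (fun f => component ε ϑ S (ε (ϑ f))) '' crossingFlags ε ϑ S := by
  ext C
  constructor
  · rintro ⟨v, hv, rfl⟩
    exact exists_crossingFlags_component_eq hinv hconn hS hv
  · rintro ⟨f, hf, rfl⟩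
    exact ⟨ε (ϑ f), hf.2, rfl⟩

theorem ncard_crossingEdges (hinv : Function.Involutive ϑ) :
    (crossingEdges ε ϑ S).ncard = (crossingFlags ε ϑ S).ncard := by
  have himage : crossingEdges ε ϑ S = (fun f => {f, ϑ f}) '' crossingFlags ε ϑ S := by
    ext e
    exact ⟨fun ⟨f, he, hf⟩ => ⟨f, hf, he.symm⟩, fun ⟨f, hf, he⟩ => ⟨f, he.symm, hf⟩⟩
  rw [himage]
  refine Set.InjOn.ncard_image fun f hf g hg hfg => ?_
  have : g ∈ ({f, ϑ f} : Set F) := hfg ▸ Set.mem_insert g _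
  rcases this with rfl | rfl
  · rfl
  · exact absurd (hinv f ▸ hg.2) hf.1

theorem Fcirc_subset_crossingFlags : Fcirc ε ϑ S ⊆ crossingFlags ε ϑ S :=
  fun _ hf => ⟨hf.1, hf.2.1⟩

/-- A chain leaving the component of `ε (ϑ f)` has to use the edge of a flag in `crossingFlags`
whose partner lies in that component. -/
theorem mem_Fcirc_of_forall_eq (hinv : Function.Involutive ϑ) {f : F}
    (hf : f ∈ crossingFlags ε ϑ S)
    (huniq : ∀ g ∈ crossingFlags ε ϑ S,
      component ε ϑ S (ε (ϑ g)) = component ε ϑ S (ε (ϑ f)) → g = f) :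
    f ∈ Fcirc ε ϑ S := by
  refine ⟨hf.1, hf.2, fun w hw w' hw' hchain => ?_⟩
  obtain ⟨a, ha, b, hb, g, hgf, hgf', rfl, rfl⟩ := hchain.exists_rel_mem_notMem hw hw'
  have hbS : ε (ϑ g) ∉ S := fun hbS => hb (mem_component_of_flag hf.2 ha hbS)
  have hcross : ϑ g ∈ crossingFlags ε ϑ S := ⟨hbS, by rw [hinv]; exact component_subset hf.2 ha⟩
  have := huniq (ϑ g) hcross (by rw [hinv]; exact component_eq_of_mem hinv ha)
  exact hgf' (by rw [← this, hinv])

theorem two_mul_ncard_pi0_le [Finite F] (hinv : Function.Involutive ϑ)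
    (hconn : IsConnectedGraph ε ϑ) (hS : S ≠ Set.univ) :
    2 * (pi0 ε ϑ S).ncard ≤ (crossingEdges ε ϑ S).ncard + (Fcirc ε ϑ S).ncard := by
  rw [pi0_eq_image_crossingFlags hinv hconn hS, ncard_crossingEdges hinv]
  exact two_mul_ncard_image_le_ncard_add_ncard (Set.toFinite _) Fcirc_subset_crossingFlags _
    fun f hf huniq => mem_Fcirc_of_forall_eq hinv hf huniq

theorem mem_of_mem_edgesIn {e : Set F} (he : e ∈ edgesIn ε ϑ S) {f : F} (hf : f ∈ e) :
    ε f ∈ S := by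
  obtain ⟨g, rfl, hg, hg'⟩ := he
  rcases hf with rfl | rfl <;> assumption

theorem edgeSet_eq_union (hinv : Function.Involutive ϑ) :
    edgeSet ϑ = edgesIn ε ϑ S ∪ edgesIn ε ϑ Sᶜ ∪ crossingEdges ε ϑ S := by
  ext e
  constructor
  · rintro ⟨f, rfl⟩
    by_cases h : ε f ∈ S <;> by_cases h' : ε (ϑ f) ∈ S
    · exact Or.inl (Or.inl ⟨f, rfl, h, h'⟩)
    · refine Or.inr ⟨ϑ f, ?_, h', by rwa [hinv]⟩
      rw [hinv, Set.pair_comm]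
    · exact Or.inr ⟨f, rfl, h, h'⟩
    · exact Or.inl (Or.inr ⟨f, rfl, h, h'⟩)
  · rintro ((⟨f, rfl, -⟩ | ⟨f, rfl, -⟩) | ⟨f, rfl, -⟩) <;> exact ⟨f, rfl⟩

theorem ncard_edgeSet [Finite F] (hinv : Function.Involutive ϑ) :
    (edgeSet ϑ).ncard =
      (edgesIn ε ϑ S).ncard + (edgesIn ε ϑ Sᶜ).ncard + (crossingEdges ε ϑ S).ncard := by
  have hdisj : Disjoint (edgesIn ε ϑ S) (edgesIn ε ϑ Sᶜ) :=
    Set.disjoint_left.2 fun e he he' => by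
      obtain ⟨f, rfl, hf, -⟩ := he
      exact mem_of_mem_edgesIn he' (Set.mem_insert f _) hf
  have hdisj' : Disjoint (edgesIn ε ϑ S ∪ edgesIn ε ϑ Sᶜ) (crossingEdges ε ϑ S) :=
    Set.disjoint_left.2 fun e he he' => by
      obtain ⟨f, rfl, hf, hf'⟩ := he'
      rcases he with he | he
      · exact hf (mem_of_mem_edgesIn he (Set.mem_insert f _))
      · exact mem_of_mem_edgesIn he (Set.mem_insert_of_mem f rfl) hf'
  rw [edgeSet_eq_union hinv, Set.ncard_union_eq hdisj' (Set.toFinite _) (Set.toFinite _),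
    Set.ncard_union_eq hdisj (Set.toFinite _) (Set.toFinite _)]

end HalfEdgeGraph

theorem stmt3_general {V F : Type*} [Fintype F]
    (ε : F → V) (ϑ : F → F) (hinv : Function.Involutive ϑ)
    (hconn : IsConnectedGraph ε ϑ)
    (𝒱 : Set V) (h𝒱 : 𝒱 ≠ Set.univ) :
    ((crossingEdges ε ϑ 𝒱).ncard : ℤ) =
        ((edgeSet ϑ).ncard : ℤ) - (edgesIn ε ϑ 𝒱).ncard - (edgesIn ε ϑ 𝒱ᶜ).ncard ∧
      2 * ((pi0 ε ϑ 𝒱).ncard : ℤ) ≤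
        ((edgeSet ϑ).ncard : ℤ) - (edgesIn ε ϑ 𝒱).ncard - (edgesIn ε ϑ 𝒱ᶜ).ncard
          + (Fcirc ε ϑ 𝒱).ncard := by
  have hedges := ncard_edgeSet (ε := ε) (S := 𝒱) hinv
  have hpi0 := two_mul_ncard_pi0_le hinv hconn h𝒱
  constructor <;> omega

/-- For a connected graph with half-edges and a proper vertex subset `𝒱`,
the number of edges with exactly one flag in `ε⁻¹(𝒱)` equals
`|E(γ)| − |E_γ(𝒱)| − |E_γ(Ver ∖ 𝒱)|`, and this number plus `|F°_γ(𝒱)|` is at least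
`2·|π₀(γ,𝒱)|`. -/
theorem stmt3 {V F : Type*} [Fintype V] [Fintype F]
    (ε : F → V) (ϑ : F → F) (hinv : Function.Involutive ϑ) (hfpf : ∀ f, ϑ f ≠ f)
    (hconn : IsConnectedGraph ε ϑ)
    (𝒱 : Set V) (h𝒱 : 𝒱 ≠ Set.univ) :
    ((crossingEdges ε ϑ 𝒱).ncard : ℤ) =
        ((edgeSet ϑ).ncard : ℤ) - (edgesIn ε ϑ 𝒱).ncard - (edgesIn ε ϑ 𝒱ᶜ).ncard ∧
      2 * ((pi0 ε ϑ 𝒱).ncard : ℤ) ≤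
        ((edgeSet ϑ).ncard : ℤ) - (edgesIn ε ϑ 𝒱).ncard - (edgesIn ε ϑ 𝒱ᶜ).ncard
          + (Fcirc ε ϑ 𝒱).ncard :=
  stmt3_general ε ϑ hinv hconn 𝒱 h𝒱
end

section
/- Let γ be a connected graph with half-edges whose vertex set is partitioned into three pairwise disjoint subsets, Ver = W ⊔ A ⊔ S, with W ≠ ∅. Then |E(γ)| − |E_γ(S)| − |π₀(γ,S)| ≥ |A|. -/
/-!
Contract every connected component of the induced subgraph on `S` to a single vertex. The
contracted simple graph is connected, and its vertices are the vertices outside `S` together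
with `π₀(γ,S)`, so there are at least `|W| + |A| + |π₀(γ,S)| ≥ 1 + |A| + |π₀(γ,S)|` of them.
A connected graph has at least one edge fewer than vertices, and every edge of the contraction
comes from an edge of `γ` outside `E_γ(S)`.
-/

open Relation Function

section Components

variable {V F : Type*} (ε : F → V) (ϑ : F → F) (S : Set V)

lemma StepIn.symm (hinv : Involutive ϑ) {v w : V} (h : StepIn ε ϑ S v w) :
    StepIn ε ϑ S w v := by
  obtain ⟨hv, hv', f, rfl, rfl⟩ := h
  exact ⟨hv', hv, ϑ f, rfl, by rw [hinv f]⟩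

lemma mem_component_self (v : V) : v ∈ component ε ϑ S v :=
  ReflTransGen.refl

lemma component_eq_of_stepIn (hinv : Involutive ϑ) {v w : V}
    (h : StepIn ε ϑ S v w) : component ε ϑ S v = component ε ϑ S w := by
  ext u
  exact ⟨ReflTransGen.head (h.symm ε ϑ S hinv), ReflTransGen.head h⟩

lemma component_of_notMem {v : V} (hv : v ∉ S) : component ε ϑ S v = {v} := by
  ext w
  refine ⟨fun h => ?_, fun h => h ▸ mem_component_self ε ϑ S v⟩
  rcases ReflTransGen.cases_head h with rfl | ⟨_, ⟨hvS, _⟩, _⟩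
  · rfl
  · exact absurd hvS hv

lemma range_component :
    Set.range (component ε ϑ S) = (fun v => ({v} : Set V)) '' Sᶜ ∪ pi0 ε ϑ S := by
  ext C
  constructor
  · rintro ⟨v, rfl⟩
    by_cases hv : v ∈ S
    · exact Or.inr ⟨v, hv, rfl⟩
    · exact Or.inl ⟨v, hv, (component_of_notMem ε ϑ S hv).symm⟩
  · rintro (⟨v, hv, rfl⟩ | ⟨v, -, rfl⟩)
    · exact ⟨v, component_of_notMem ε ϑ S hv⟩
    · exact ⟨v, rfl⟩

lemma ncard_range_component [Finite V] :
    (Set.range (component ε ϑ S)).ncard = Sᶜ.ncard + (pi0 ε ϑ S).ncard := by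
  have hdisj : Disjoint ((fun v => ({v} : Set V)) '' Sᶜ) (pi0 ε ϑ S) := by
    rw [Set.disjoint_left]
    rintro _ ⟨v, hv, rfl⟩ ⟨u, hu, hvu⟩
    have : u ∈ ({v} : Set V) := by
      rw [show ({v} : Set V) = _ from hvu]; exact mem_component_self ε ϑ S u
    exact hv (Set.mem_singleton_iff.mp this ▸ hu)
  rw [range_component, Set.ncard_union_eq hdisj,
    Set.ncard_image_of_injective _ Set.singleton_injective]

end Components

section Contraction

variable {V F Q : Type*} (ε : F → V) (ϑ : F → F) (mk : V → Q)

/-- The simple graph obtained from `γ` by identifying vertices with the same image under `mk`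
(loops and multiple edges are discarded). -/
def contraction : SimpleGraph Q :=
  SimpleGraph.fromRel fun x y => ∃ f, mk (ε f) = x ∧ mk (ε (ϑ f)) = y

def edgesSeparatedBy : Set (Set F) :=
  {e | ∃ f, e = {f, ϑ f} ∧ mk (ε f) ≠ mk (ε (ϑ f))}

lemma contraction_connected [Nonempty Q] (hconn : IsConnectedGraph ε ϑ)
    (hmk : Surjective mk) : (contraction ε ϑ mk).Connected := by
  have hstep : Step ε ϑ ≤ (ReflTransGen (contraction ε ϑ mk).Adj on mk) := by
    rintro _ _ ⟨f, rfl, rfl⟩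
    by_cases h : mk (ε f) = mk (ε (ϑ f))
    · exact show ReflTransGen _ (mk (ε f)) _ by rw [h]
    · exact ReflTransGen.single ⟨h, Or.inl ⟨f, rfl, rfl⟩⟩
  refine SimpleGraph.Connected.mk fun x y => ?_
  obtain ⟨v, rfl⟩ := hmk x
  obtain ⟨w, rfl⟩ := hmk y
  rw [SimpleGraph.reachable_iff_reflTransGen]
  by_cases hvw : v = w
  · exact hvw ▸ ReflTransGen.refl
  · exact ReflTransGen.lift' mk hstep _ _ (hconn v w hvw)

/-- Sending an edge `s(x, y)` of the contraction to `{x, y}` and an edge `e` of `γ` to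
`mk ∘ ε '' e`, every edge of the contraction is hit by a separated edge. -/
lemma ncard_edgeSet_contraction_le [Finite F] :
    (contraction ε ϑ mk).edgeSet.ncard ≤ (edgesSeparatedBy ε ϑ mk).ncard := by
  let toSet : Sym2 Q → Set Q := fun z => {x | x ∈ z}
  have htoSet : toSet.Injective := fun z z' h => Sym2.ext fun x => Set.ext_iff.mp h x
  have hcover : toSet '' (contraction ε ϑ mk).edgeSet ⊆
      Set.image (mk ∘ ε) '' edgesSeparatedBy ε ϑ mk := by
    rintro _ ⟨z, hz, rfl⟩
    induction z using Sym2.ind with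
    | h x y =>
      obtain ⟨hxy, ⟨f, rfl, rfl⟩ | ⟨f, rfl, rfl⟩⟩ := hz
      · refine ⟨{f, ϑ f}, ⟨f, rfl, hxy⟩, ?_⟩
        ext; simp [toSet, Set.image_pair]
      · refine ⟨{f, ϑ f}, ⟨f, rfl, Ne.symm hxy⟩, ?_⟩
        ext; simp [toSet, Set.image_pair, or_comm]
  calc (contraction ε ϑ mk).edgeSet.ncard
      = (toSet '' (contraction ε ϑ mk).edgeSet).ncard :=
        (Set.ncard_image_of_injective _ htoSet).symm
    _ ≤ (Set.image (mk ∘ ε) '' edgesSeparatedBy ε ϑ mk).ncard := Set.ncard_le_ncard hcover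
    _ ≤ (edgesSeparatedBy ε ϑ mk).ncard := Set.ncard_image_le

end Contraction

lemma eq_or_eq_of_pair_eq {F : Type*} {ϑ : F → F} {f g : F}
    (h : ({f, ϑ f} : Set F) = {g, ϑ g}) : g = f ∨ g = ϑ f := by
  have : g ∈ ({f, ϑ f} : Set F) := h ▸ Set.mem_insert g _
  simpa using this

lemma edgesSeparatedBy_component_subset {V F : Type*} (ε : F → V) (ϑ : F → F) (S : Set V)
    (hinv : Involutive ϑ) :
    edgesSeparatedBy ε ϑ (Set.rangeFactorization (component ε ϑ S)) ⊆
      edgeSet ϑ \ edgesIn ε ϑ S := by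
  rintro _ ⟨f, rfl, hsep⟩
  refine ⟨⟨f, rfl⟩, ?_⟩
  rintro ⟨g, hg, hgS, hϑgS⟩
  apply hsep
  apply Subtype.ext
  rcases eq_or_eq_of_pair_eq hg with rfl | rfl
  · exact component_eq_of_stepIn ε ϑ S hinv ⟨hgS, hϑgS, g, rfl, rfl⟩
  · rw [hinv f] at hϑgS
    exact (component_eq_of_stepIn ε ϑ S hinv ⟨hgS, hϑgS, ϑ f, rfl, by rw [hinv f]⟩).symm

theorem stmt6_general {V F : Type*} [Fintype V] [Fintype F]
    (ε : F → V) (ϑ : F → F) (hinv : Function.Involutive ϑ)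
    (hconn : IsConnectedGraph ε ϑ)
    (W A S : Set V)
    (hWA : Disjoint W A) (hWS : Disjoint W S) (hAS : Disjoint A S)
    (hW : W.Nonempty) :
    (A.ncard : ℤ) ≤
      ((edgeSet ϑ).ncard : ℤ) - (edgesIn ε ϑ S).ncard - (pi0 ε ϑ S).ncard := by
  have : Nonempty V := ⟨hW.some⟩
  have houtside : A.ncard + 1 ≤ Sᶜ.ncard :=
    calc A.ncard + 1 ≤ A.ncard + W.ncard := Nat.add_le_add_left hW.ncard_pos _
      _ = (W ∪ A).ncard := by rw [Set.ncard_union_eq hWA, add_comm]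
      _ ≤ Sᶜ.ncard := Set.ncard_le_ncard <|
        Set.union_subset hWS.subset_compl_right hAS.subset_compl_right
  have hvert := (contraction_connected ε ϑ (Set.rangeFactorization (component ε ϑ S)) hconn
    Set.rangeFactorization_surjective).card_vert_le_card_edgeSet_add_one
  rw [Nat.card_coe_set_eq, Nat.card_coe_set_eq, ncard_range_component] at hvert
  have hedges := (ncard_edgeSet_contraction_le ε ϑ _).trans
    (Set.ncard_le_ncard (edgesSeparatedBy_component_subset ε ϑ S hinv))
  have hsub : edgesIn ε ϑ S ⊆ edgeSet ϑ := fun _ ⟨f, hf, _⟩ => ⟨f, hf⟩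
  rw [Set.ncard_sdiff hsub] at hedges
  have := Set.ncard_le_ncard hsub
  omega

/-- For a connected graph with half-edges whose vertex set is partitioned
as `Ver = W ⊔ A ⊔ S` with `W ≠ ∅`, one has `|E(γ)| − |E_γ(S)| − |π₀(γ,S)| ≥ |A|`. -/
theorem stmt6 {V F : Type*} [Fintype V] [Fintype F]
    (ε : F → V) (ϑ : F → F) (hinv : Function.Involutive ϑ) (hfpf : ∀ f, ϑ f ≠ f)
    (hconn : IsConnectedGraph ε ϑ)
    (W A S : Set V)
    (hWA : Disjoint W A) (hWS : Disjoint W S) (hAS : Disjoint A S)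
    (hunion : W ∪ A ∪ S = Set.univ) (hW : W.Nonempty) :
    (A.ncard : ℤ) ≤
      ((edgeSet ϑ).ncard : ℤ) - (edgesIn ε ϑ S).ncard - (pi0 ε ϑ S).ncard :=
  stmt6_general ε ϑ hinv hconn W A S hWA hWS hAS hW
end
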